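/- arXiv:2007.05702 — 2 statements merged into one kernel-verified Lean document; each statement's English description precedes it below -/
import Mathlib

section
/- Let σ₁, σ₂ ⊆ ℂ be nonempty compact sets with Re(x) < 0 for all x ∈ σ₁ and Re(x) > 0 for all x ∈ σ₂, let σ = σ₁ ∪ σ₂, and let δ : σ → ℂ vanish identically on σ₂. Then var(δ, σ) ≤ var(δ|σ₁, σ₁) + ‖δ‖_{∞,σ₁}; that is, for every finite list S = [x₀,…,xₙ] of points of σ, cvar(δ, S)/vf(S) ≤ var(δ, σ₁) + sup_{x ∈ σ₁} |δ(x)|. -/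
/-!
Cut a list `S` of points of `σ₁ ∪ σ₂` into its segments. A segment with both ends in `σ₁` is
a segment of the sublist `S₁` of points of `σ₁`, so these contribute at most
`cvar(δ, S₁) ≤ var(δ, σ₁) · vf(S₁) ≤ var(δ, σ₁) · vf(S)`. Here `S₁` may repeat a point
consecutively, but dropping the repetition changes no `cvar`; and a sublist crosses every line
at most as often as `S` does, because a crossing of the sublist between two of its points forces
a sign change of the side function, hence a crossing of `S`, between the same points.
Segments inside `σ₂` contribute nothing, and a mixed segment contributes `|δ(z)| ≤ ‖δ‖_{∞,σ₁}`
and crosses the imaginary axis, so there are at most `vf(S)` of them.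
-/

open scoped ENNReal NNReal
open scoped ENNReal NNReal

/-- Cross product of two planar vectors (identified with complex numbers). -/
def crossC (v w : ℂ) : ℝ := v.re * w.im - v.im * w.re

/-- Signed side of the point `x` relative to the line through `u` with direction `v`. -/
def sideC (u v x : ℂ) : ℝ := crossC v (x - u)

/-- The segment `[x i, x (i+1)]` is a crossing segment of the list `x` on the line
through `u` with direction `v`. -/
def CrossSeg {n : ℕ} (u v : ℂ) (x : Fin (n+1) → ℂ) (i : Fin n) : Prop :=
  (sideC u v (x i.castSucc) * sideC u v (x i.succ) < 0) ∨
  ((i : ℕ) = 0 ∧ sideC u v (x i.castSucc) = 0) ∨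
  (sideC u v (x i.castSucc) ≠ 0 ∧ sideC u v (x i.succ) = 0)

/-- Number of crossing segments of a list on a given line. -/
noncomputable def vfLine {n : ℕ} (u v : ℂ) (x : Fin (n+1) → ℂ) : ℕ :=
  Nat.card {i : Fin n // CrossSeg u v x i}

/-- Variation factor of a list: the maximum of `vfLine` over all lines. -/
noncomputable def vf {n : ℕ} (x : Fin (n+1) → ℂ) : ℕ :=
  sSup {m : ℕ | ∃ u v : ℂ, v ≠ 0 ∧ m = vfLine u v x}

/-- Curve variation of `f` along a list of points. -/
noncomputable def cvar {n : ℕ} (f : ℂ → ℂ) (x : Fin (n+1) → ℂ) : ℝ :=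
  ∑ i : Fin n, ‖f (x i.succ) - f (x i.castSucc)‖

/-- Two-dimensional variation of `f` on `σ`. -/
noncomputable def twoVar (f : ℂ → ℂ) (σ : Set ℂ) : ℝ≥0∞ :=
  ⨆ (n : ℕ) (x : Fin (n+1) → ℂ) (_ : ∀ i, x i ∈ σ)
    (_ : ∀ i : Fin n, x i.castSucc ≠ x i.succ),
    ENNReal.ofReal (cvar f x) / (vf x : ℝ≥0∞)

open Finset

lemma crossSeg_iff {n : ℕ} (u v : ℂ) (x : Fin (n+1) → ℂ) (i : Fin n) :
    CrossSeg u v x i ↔ ((i : ℕ) = 0 ∧ sideC u v (x i.castSucc) = 0) ∨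
      (sideC u v (x i.castSucc) ≠ 0 ∧
        sideC u v (x i.castSucc) * sideC u v (x i.succ) ≤ 0) := by
  unfold CrossSeg
  generalize sideC u v (x i.castSucc) = p, sideC u v (x i.succ) = q
  constructor
  · rintro (h | h | ⟨hp, rfl⟩)
    · exact Or.inr ⟨left_ne_zero_of_mul (ne_of_lt h), h.le⟩
    · exact Or.inl h
    · exact Or.inr ⟨hp, by simp⟩
  · rintro (h | ⟨hp, h⟩)
    · exact Or.inr (Or.inl h)
    · rcases h.lt_or_eq with h | h
      · exact Or.inl h
      · exact Or.inr (Or.inr ⟨hp, (mul_eq_zero.1 h).resolve_left hp⟩)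

lemma exists_sign_change_between {n : ℕ} (s : Fin (n+1) → ℝ) {a b : Fin (n+1)} (hab : a ≤ b)
    (ha : s a ≠ 0) (hb : s a * s b ≤ 0) :
    ∃ i : Fin n, a ≤ i.castSucc ∧ i.castSucc < b ∧
      s i.castSucc ≠ 0 ∧ s i.castSucc * s i.succ ≤ 0 := by
  have ha' : 0 < s a * s a := mul_self_pos.2 ha
  induction b using Fin.induction with
  | zero => exact absurd (le_antisymm hab (Fin.zero_le a) ▸ hb) (not_le.2 ha')
  | succ i ih =>
    rcases hab.lt_or_eq with hlt | rfl
    · have hai : a ≤ i.castSucc := Fin.le_castSucc_iff.2 hlt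
      by_cases hsi : s a * s i.castSucc ≤ 0
      · obtain ⟨k, hak, hki, hk⟩ := ih hai hsi
        exact ⟨k, hak, hki.trans Fin.castSucc_lt_succ, hk⟩
      · rw [not_le] at hsi
        refine ⟨i, hai, Fin.castSucc_lt_succ, right_ne_zero_of_mul hsi.ne', ?_⟩
        nlinarith [sq_nonneg (s i.castSucc)]
    · exact absurd hb (not_le.2 ha')

lemma vfLine_comp_le {n m : ℕ} (u v : ℂ) (x : Fin (n+1) → ℂ) {φ : Fin (m+1) → Fin (n+1)}
    (hφ : StrictMono φ) : vfLine u v (x ∘ φ) ≤ vfLine u v x := by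
  set s : Fin (n+1) → ℝ := fun k => sideC u v (x k)
  have hcross : ∀ i : Fin n, s i.castSucc ≠ 0 → s i.castSucc * s i.succ ≤ 0 →
      CrossSeg u v x i := fun i h0 h => (crossSeg_iff u v x i).2 (Or.inr ⟨h0, h⟩)
  have key : ∀ j : Fin m, CrossSeg u v (x ∘ φ) j → ∃ i : Fin n, CrossSeg u v x i ∧
      i.castSucc < φ j.succ ∧ ((j : ℕ) ≠ 0 → φ j.castSucc ≤ i.castSucc) := by
    intro j hj
    have hφj : φ j.castSucc < φ j.succ := hφ Fin.castSucc_lt_succ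
    rcases (crossSeg_iff u v _ j).1 hj with ⟨hj0, hzero⟩ | ⟨hne, hsign⟩
    · by_cases hs0 : s 0 = 0
      · have hn : 0 < n := by have := (φ j.succ).isLt; omega
        exact ⟨⟨0, hn⟩, (crossSeg_iff u v x _).2 (Or.inl ⟨rfl, hs0⟩),
          (Fin.zero_le _).trans_lt hφj, absurd hj0⟩
      · obtain ⟨i, -, hi, hi0, hi1⟩ := exists_sign_change_between s
          (Fin.zero_le (φ j.castSucc)) hs0
          (by simp only [s, Function.comp_apply] at hzero ⊢; rw [hzero, mul_zero])
        exact ⟨i, hcross i hi0 hi1, hi.trans hφj, absurd hj0⟩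
    · obtain ⟨i, hi, hi', hi0, hi1⟩ := exists_sign_change_between s hφj.le hne hsign
      exact ⟨i, hcross i hi0 hi1, hi', fun _ => hi⟩
  choose g hg using key
  let G : {j // CrossSeg u v (x ∘ φ) j} → {i // CrossSeg u v x i} :=
    fun j => ⟨g j.1 j.2, (hg j.1 j.2).1⟩
  have hG : StrictMono G := by
    intro p q hpq
    have hq : (q.1 : ℕ) ≠ 0 := by have : (p.1 : ℕ) < q.1 := hpq; omega
    have : φ p.1.succ ≤ φ q.1.castSucc := hφ.monotone (Fin.succ_le_castSucc_iff.2 hpq)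
    exact Fin.castSucc_lt_castSucc_iff.1
      (((hg p.1 p.2).2.1.trans_le this).trans_le ((hg q.1 q.2).2.2 hq))
  exact Nat.card_le_card_of_injective G hG.injective

lemma vfLine_le {n : ℕ} (u v : ℂ) (x : Fin (n+1) → ℂ) : vfLine u v x ≤ n :=
  (Nat.card_le_card_of_injective _ Subtype.val_injective).trans_eq (Nat.card_fin n)

lemma vfLine_le_vf {n : ℕ} (u : ℂ) {v : ℂ} (hv : v ≠ 0) (x : Fin (n+1) → ℂ) :
    vfLine u v x ≤ vf x :=
  le_csSup ⟨n, by rintro _ ⟨u, v, -, rfl⟩; exact vfLine_le u v x⟩ ⟨u, v, hv, rfl⟩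

lemma vf_comp_le {n m : ℕ} (x : Fin (n+1) → ℂ) {φ : Fin (m+1) → Fin (n+1)}
    (hφ : StrictMono φ) : vf (x ∘ φ) ≤ vf x :=
  csSup_le ⟨_, 0, 1, one_ne_zero, rfl⟩ fun _ ⟨u, v, hv, h⟩ =>
    h ▸ (vfLine_comp_le u v x hφ).trans (vfLine_le_vf u hv x)

lemma vf_pos {n : ℕ} (x : Fin (n+2) → ℂ) : 0 < vf x := by
  have h : CrossSeg (x 0) 1 x 0 :=
    (crossSeg_iff _ _ x 0).2 (Or.inl ⟨rfl, by simp [sideC, crossC]⟩)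
  exact (Nat.card_pos_iff.2 ⟨⟨⟨0, h⟩⟩, inferInstance⟩).trans_le
    (vfLine_le_vf (x 0) one_ne_zero x)

lemma comp_succAbove_castSucc_eq_comp_succAbove_succ {α : Type*} {m : ℕ}
    (y : Fin (m+2) → α) {j : Fin (m+1)} (hj : y j.castSucc = y j.succ) :
    y ∘ j.castSucc.succAbove = y ∘ j.succ.succAbove := by
  funext k
  simp only [Function.comp_apply]
  rcases lt_trichotomy k j with h | rfl | h
  · rw [Fin.succAbove_of_castSucc_lt _ _ (Fin.castSucc_lt_castSucc_iff.2 h),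
      Fin.succAbove_of_castSucc_lt _ _ (Fin.castSucc_lt_succ_iff.2 h.le)]
  · rw [Fin.succAbove_castSucc_self, Fin.succAbove_succ_self, hj]
  · rw [Fin.succAbove_of_le_castSucc _ _ (Fin.castSucc_le_castSucc_iff.2 h.le),
      Fin.succAbove_of_le_castSucc _ _ (Fin.succ_le_castSucc_iff.2 h)]

lemma cvar_comp_succAbove_succ_of_eq (f : ℂ → ℂ) {m : ℕ} (y : Fin (m+2) → ℂ)
    {j : Fin (m+1)} (hj : y j.castSucc = y j.succ) :
    cvar f (y ∘ j.succ.succAbove) = cvar f y := by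
  rw [cvar, cvar, Fin.sum_univ_succAbove _ j, hj, sub_self, norm_zero, zero_add]
  refine Finset.sum_congr rfl fun i _ => ?_
  have hsucc : y (j.succ.succAbove i.succ) = y (j.succAbove i).succ := by
    rw [Fin.succ_succAbove_succ]
  have hcast : y (j.succ.succAbove i.castSucc) = y (j.succAbove i).castSucc := by
    rw [← Fin.castSucc_succAbove_castSucc]
    exact congrFun (comp_succAbove_castSucc_eq_comp_succAbove_succ y hj).symm _
  simp only [Function.comp_apply, hsucc, hcast]

lemma ofReal_cvar_le_twoVar_mul_vf_of_ne (f : ℂ → ℂ) (σ : Set ℂ) {m : ℕ}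
    (y : Fin (m+1) → ℂ) (hy : ∀ i, y i ∈ σ) (hne : ∀ i : Fin m, y i.castSucc ≠ y i.succ) :
    ENNReal.ofReal (cvar f y) ≤ twoVar f σ * vf y := by
  cases m with
  | zero => simp [cvar]
  | succ m =>
    have hdiv : ENNReal.ofReal (cvar f y) / vf y ≤ twoVar f σ :=
      le_iSup_of_le (m+1) <| le_iSup_of_le y <| le_iSup_of_le hy <| le_iSup_of_le hne le_rfl
    have hvf : (vf y : ℝ≥0∞) ≠ 0 := by exact_mod_cast (vf_pos y).ne'
    rwa [ENNReal.div_le_iff hvf (ENNReal.natCast_ne_top _)] at hdiv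

lemma ofReal_cvar_le_twoVar_mul_vf (f : ℂ → ℂ) (σ : Set ℂ) {m : ℕ}
    (y : Fin (m+1) → ℂ) (hy : ∀ i, y i ∈ σ) :
    ENNReal.ofReal (cvar f y) ≤ twoVar f σ * vf y := by
  induction m with
  | zero => exact ofReal_cvar_le_twoVar_mul_vf_of_ne f σ y hy finZeroElim
  | succ m ih =>
    by_cases hne : ∀ i : Fin (m+1), y i.castSucc ≠ y i.succ
    · exact ofReal_cvar_le_twoVar_mul_vf_of_ne f σ y hy hne
    · obtain ⟨j, hj⟩ := not_forall_not.1 hne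
      calc ENNReal.ofReal (cvar f y) = ENNReal.ofReal (cvar f (y ∘ j.succ.succAbove)) := by
            rw [cvar_comp_succAbove_succ_of_eq f y hj]
        _ ≤ twoVar f σ * vf (y ∘ j.succ.succAbove) := ih _ fun i => hy _
        _ ≤ twoVar f σ * vf y := by
            gcongr
            exact vf_comp_le y (Fin.strictMono_succAbove _)

lemma StrictMono.exists_castSucc_succ_eq {n k : ℕ} {ψ : Fin (k+1) → Fin (n+1)}
    (hψ : StrictMono ψ) {i : Fin n} (h₀ : i.castSucc ∈ Set.range ψ)
    (h₁ : i.succ ∈ Set.range ψ) :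
    ∃ j : Fin k, ψ j.castSucc = i.castSucc ∧ ψ j.succ = i.succ := by
  obtain ⟨a, ha⟩ := h₀
  obtain ⟨b, hb⟩ := h₁
  have hab : a < b := hψ.lt_iff_lt.1 (ha ▸ hb ▸ Fin.castSucc_lt_succ)
  have hb' : (b : ℕ) = a + 1 := by
    by_contra hne
    have hc : (a : ℕ) + 1 < k + 1 := by omega
    have h₁ := hψ (show a < ⟨a + 1, hc⟩ from Fin.lt_def.2 (Nat.lt_succ_self _))
    have h₂ := hψ (show (⟨a + 1, hc⟩ : Fin (k+1)) < b from Fin.lt_def.2 (by dsimp; omega))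
    rw [ha, Fin.lt_def, Fin.val_castSucc] at h₁
    rw [hb, Fin.lt_def, Fin.val_succ] at h₂
    omega
  refine ⟨⟨a, by omega⟩, ?_, ?_⟩
  · rw [← ha]; rfl
  · rw [← hb]; congr 1; ext; simp [hb']

lemma sum_le_cvar_comp (f : ℂ → ℂ) {n k : ℕ} (x : Fin (n+1) → ℂ)
    {ψ : Fin (k+1) → Fin (n+1)} (hψ : StrictMono ψ) (S : Finset (Fin n))
    (hS : ∀ i ∈ S, i.castSucc ∈ Set.range ψ ∧ i.succ ∈ Set.range ψ) :
    ∑ i ∈ S, ‖f (x i.succ) - f (x i.castSucc)‖ ≤ cvar f (x ∘ ψ) := by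
  have hadj : ∀ i : S, ∃ j : Fin k, ψ j.castSucc = i.1.castSucc ∧ ψ j.succ = i.1.succ :=
    fun i => hψ.exists_castSucc_succ_eq (hS i i.2).1 (hS i i.2).2
  choose g hg using hadj
  have hg_inj : Function.Injective g := fun p q h =>
    Subtype.ext (Fin.castSucc_injective _ ((hg p).1.symm.trans (h ▸ (hg q).1)))
  calc ∑ i ∈ S, ‖f (x i.succ) - f (x i.castSucc)‖
      = ∑ i : S, ‖f ((x ∘ ψ) (g i).succ) - f ((x ∘ ψ) (g i).castSucc)‖ := by
        rw [← Finset.sum_coe_sort S]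
        simp only [Function.comp_apply, (hg _).1, (hg _).2]
    _ = ∑ j ∈ univ.map ⟨g, hg_inj⟩, ‖f ((x ∘ ψ) j.succ) - f ((x ∘ ψ) j.castSucc)‖ := by
        rw [Finset.sum_map]; rfl
    _ ≤ cvar f (x ∘ ψ) :=
        Finset.sum_le_sum_of_subset_of_nonneg (subset_univ _) fun _ _ _ => norm_nonneg _

lemma ofReal_sum_le_twoVar_mul_vf (f : ℂ → ℂ) {σ : Set ℂ} {n : ℕ} (x : Fin (n+1) → ℂ)
    (S : Finset (Fin n)) (hS : ∀ i ∈ S, x i.castSucc ∈ σ ∧ x i.succ ∈ σ) :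
    ENNReal.ofReal (∑ i ∈ S, ‖f (x i.succ) - f (x i.castSucc)‖) ≤ twoVar f σ * vf x := by
  classical
  set T := univ.filter fun j => x j ∈ σ
  rcases hT : T.card with _ | k
  · have : S = ∅ := eq_empty_of_forall_notMem fun i hi => by
      have hi' : i.castSucc ∈ T := mem_filter.2 ⟨mem_univ _, (hS i hi).1⟩
      simp [card_eq_zero.1 hT] at hi'
    simp [this]
  set ψ := T.orderEmbOfFin hT
  have hψ : Set.range ψ = T := T.range_orderEmbOfFin hT
  calc ENNReal.ofReal (∑ i ∈ S, ‖f (x i.succ) - f (x i.castSucc)‖)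
      ≤ ENNReal.ofReal (cvar f (x ∘ ψ)) :=
        ENNReal.ofReal_le_ofReal <| sum_le_cvar_comp f x ψ.strictMono S fun i hi => by
          simpa [hψ, T] using hS i hi
    _ ≤ twoVar f σ * vf (x ∘ ψ) :=
        ofReal_cvar_le_twoVar_mul_vf f σ _ fun j =>
          (mem_filter.1 (T.orderEmbOfFin_mem hT j)).2
    _ ≤ twoVar f σ * vf x := by
        gcongr
        exact vf_comp_le x ψ.strictMono

lemma card_re_mul_neg_le_vf {n : ℕ} (x : Fin (n+1) → ℂ) :
    (univ.filter fun i : Fin n => (x i.castSucc).re * (x i.succ).re < 0).card ≤ vf x := by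
  have hside : ∀ z : ℂ, sideC 0 Complex.I z = -z.re := fun z => by simp [sideC, crossC]
  calc (univ.filter fun i : Fin n => (x i.castSucc).re * (x i.succ).re < 0).card
      = Nat.card {i : Fin n // (x i.castSucc).re * (x i.succ).re < 0} := by
        rw [Nat.card_eq_fintype_card, Fintype.card_subtype]
    _ ≤ vfLine 0 Complex.I x :=
        Nat.card_le_card_of_injective _ (Subtype.impEmbedding _ _ fun i hi =>
          Or.inl (by rw [hside, hside]; linarith)).injective
    _ ≤ vf x := vfLine_le_vf 0 Complex.I_ne_zero x

lemma ofReal_norm_sub_le_of_not_both_mem {σ₁ σ₂ : Set ℂ} (hre1 : ∀ z ∈ σ₁, z.re < 0)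
    (hre2 : ∀ z ∈ σ₂, 0 < z.re) {δ : ℂ → ℂ} (hδ : ∀ z ∈ σ₂, δ z = 0) {z w : ℂ}
    (hz : z ∈ σ₁ ∪ σ₂) (hw : w ∈ σ₁ ∪ σ₂) (h : ¬(z ∈ σ₁ ∧ w ∈ σ₁)) :
    ENNReal.ofReal ‖δ w - δ z‖ ≤
      if z.re * w.re < 0 then ⨆ z ∈ σ₁, (‖δ z‖₊ : ℝ≥0∞) else 0 := by
  rcases hz with hz | hz <;> rcases hw with hw | hw
  · exact absurd ⟨hz, hw⟩ h
  · rw [if_pos (mul_neg_of_neg_of_pos (hre1 z hz) (hre2 w hw)), hδ w hw, zero_sub, norm_neg]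
    exact le_iSup₂_of_le z hz (ofReal_norm _).le
  · rw [if_pos (mul_neg_of_pos_of_neg (hre2 z hz) (hre1 w hw)), hδ z hz, sub_zero]
    exact le_iSup₂_of_le w hw (ofReal_norm _).le
  · simp [hδ z hz, hδ w hw]

theorem stmt14_general (σ₁ σ₂ : Set ℂ)
    (hre1 : ∀ z ∈ σ₁, z.re < 0) (hre2 : ∀ z ∈ σ₂, 0 < z.re)
    (δ : ℂ → ℂ) (hδ : ∀ z ∈ σ₂, δ z = 0) :
    twoVar δ (σ₁ ∪ σ₂) ≤ twoVar δ σ₁ + ⨆ z ∈ σ₁, (‖δ z‖₊ : ℝ≥0∞) := by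
  classical
  set M := ⨆ z ∈ σ₁, (‖δ z‖₊ : ℝ≥0∞)
  refine iSup_le fun n => iSup_le fun x => iSup_le fun hx => iSup_le fun _ =>
    ENNReal.div_le_of_le_mul ?_
  set a : Fin n → ℝ := fun i => ‖δ (x i.succ) - δ (x i.castSucc)‖
  set S := univ.filter fun i : Fin n => x i.castSucc ∈ σ₁ ∧ x i.succ ∈ σ₁
  set C := univ.filter fun i : Fin n => (x i.castSucc).re * (x i.succ).re < 0
  calc ENNReal.ofReal (cvar δ x)
      = ∑ i ∈ S, ENNReal.ofReal (a i) + ∑ i ∈ Sᶜ, ENNReal.ofReal (a i) := by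
        rw [sum_add_sum_compl, cvar, ENNReal.ofReal_sum_of_nonneg fun i _ => norm_nonneg _]
    _ ≤ ENNReal.ofReal (∑ i ∈ S, a i) +
          ∑ i : Fin n, if (x i.castSucc).re * (x i.succ).re < 0 then M else 0 := by
        rw [ENNReal.ofReal_sum_of_nonneg fun i _ => norm_nonneg _]
        gcongr
        refine (sum_le_sum fun i hi => ?_).trans (sum_le_sum_of_subset (subset_univ _))
        exact ofReal_norm_sub_le_of_not_both_mem hre1 hre2 hδ (hx _) (hx _)
          (by simpa [S] using hi)
    _ = ENNReal.ofReal (∑ i ∈ S, a i) + C.card * M := by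
        rw [← sum_filter, sum_const, nsmul_eq_mul]
    _ ≤ twoVar δ σ₁ * vf x + vf x * M := by
        gcongr
        · exact ofReal_sum_le_twoVar_mul_vf δ x S fun i hi => (mem_filter.1 hi).2
        · exact card_re_mul_neg_le_vf x
    _ = (twoVar δ σ₁ + M) * vf x := by ring

theorem stmt14 (σ₁ σ₂ : Set ℂ) (h1 : IsCompact σ₁) (h2 : IsCompact σ₂)
    (hn1 : σ₁.Nonempty) (hn2 : σ₂.Nonempty)
    (hre1 : ∀ z ∈ σ₁, z.re < 0) (hre2 : ∀ z ∈ σ₂, 0 < z.re)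
    (δ : ℂ → ℂ) (hδ : ∀ z ∈ σ₂, δ z = 0) :
    twoVar δ (σ₁ ∪ σ₂) ≤ twoVar δ σ₁ + ⨆ z ∈ σ₁, (‖δ z‖₊ : ℝ≥0∞) :=
  stmt14_general σ₁ σ₂ hre1 hre2 δ hδ
end

section
/- Let C be a differentiable convex curve in ℝ² with endpoints x ≠ y. Then C can be split into finitely many projectable convex subcurves: there exist parameters 0 = s₀ < s₁ < ⋯ < sₘ = L of an arc-length parameterization γ of C such that each arc γ([sⱼ₋₁, sⱼ]) is a convex curve whose orthogonal projection onto the line through its own endpoints is exactly the segment joining those endpoints. -/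
/-- Dot product of two planar vectors. -/
def dotR (v w : ℝ × ℝ) : ℝ := v.1 * w.1 + v.2 * w.2

/-- Orthogonal projection of `z` onto the line through `a` and `b` (for `a ≠ b`). -/
noncomputable def projLine (a b z : ℝ × ℝ) : ℝ × ℝ :=
  a + ((dotR (z - a) (b - a)) / (dotR (b - a) (b - a))) • (b - a)

/-!
If a linear functional `t ↦ dotR e (γ t)` along a convex curve crossed a level `c` upwards,
downwards and upwards again, the curve would meet the line `dotR e · = c` in three distinct points.
The supporting line at the middle one of them must then be that line itself, yet the curve has
points strictly on both sides of it. Hence each coordinate of `γ` is monotone on each of at most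
three pieces. Cutting at the turning points of both coordinates leaves arcs that stay inside the
box spanned by their endpoints, hence inside the strip over their chord, and a connected set in
that strip containing both endpoints projects onto the whole chord.
-/

open Set

lemma dotR_sub_right (w x y : ℝ × ℝ) : dotR w (x - y) = dotR w x - dotR w y := by
  simp only [dotR, Prod.fst_sub, Prod.snd_sub]; ring

lemma dotR_smul_left (μ : ℝ) (w v : ℝ × ℝ) : dotR (μ • w) v = μ * dotR w v := by
  simp only [dotR, Prod.smul_fst, Prod.smul_snd, smul_eq_mul]; ring

lemma dotR_smul_right (w : ℝ × ℝ) (μ : ℝ) (v : ℝ × ℝ) : dotR w (μ • v) = μ * dotR w v := by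
  simp only [dotR, Prod.smul_fst, Prod.smul_snd, smul_eq_mul]; ring

lemma dotR_self_pos {v : ℝ × ℝ} (hv : v ≠ 0) : 0 < dotR v v := by
  have h : v.1 ≠ 0 ∨ v.2 ≠ 0 := by rwa [Ne, Prod.ext_iff, not_and_or] at hv
  unfold dotR
  rcases h with h | h
  · nlinarith [mul_self_pos.2 h, mul_self_nonneg v.2]
  · nlinarith [mul_self_pos.2 h, mul_self_nonneg v.1]

lemma dotR_self_smul_eq_of_dotR_eq_zero {e w v : ℝ × ℝ} (hv : v ≠ 0) (he : dotR e v = 0)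
    (hw : dotR w v = 0) : dotR e e • w = dotR w e • e := by
  have hcross : w.1 * e.2 - w.2 * e.1 = 0 := by
    have h : v.1 ≠ 0 ∨ v.2 ≠ 0 := by rwa [Ne, Prod.ext_iff, not_and_or] at hv
    unfold dotR at he hw
    rcases h with h | h
    · exact (mul_eq_zero.1 (by linear_combination e.2 * hw - w.2 * he :
        (w.1 * e.2 - w.2 * e.1) * v.1 = 0)).resolve_right h
    · exact (mul_eq_zero.1 (by linear_combination w.1 * he - e.1 * hw :
        (w.1 * e.2 - w.2 * e.1) * v.2 = 0)).resolve_right h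
  ext <;> simp only [dotR, Prod.smul_fst, Prod.smul_snd, smul_eq_mul]
  · linear_combination e.2 * hcross
  · linear_combination -e.1 * hcross

lemma collinear_setOf_dotR_eq {e : ℝ × ℝ} (he : e ≠ 0) (c : ℝ) :
    Collinear ℝ {p | dotR e p = c} := by
  have hN : e.1 ^ 2 + e.2 ^ 2 ≠ 0 := by simpa only [dotR, sq] using (dotR_self_pos he).ne'
  rw [collinear_iff_exists_forall_eq_smul_vadd]
  refine ⟨(c / dotR e e) • e, (-e.2, e.1), fun p hp => ⟨(e.1 * p.2 - e.2 * p.1) / dotR e e, ?_⟩⟩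
  obtain rfl : dotR e p = c := hp
  simp only [dotR, ← sq]
  ext <;> simp only [vadd_eq_add, Prod.fst_add, Prod.snd_add, Prod.smul_fst, Prod.smul_snd,
    smul_eq_mul] <;> field_simp <;> ring

/-- The supporting line at a point strictly between two others of `S` is the line through them. -/
lemma forall_le_or_forall_ge_of_wbtw {S : Set (ℝ × ℝ)}
    (hS : ∀ p ∈ S, ∃ w : ℝ × ℝ, w ≠ 0 ∧ ∀ q ∈ S, 0 ≤ dotR w (q - p))
    {e x y z : ℝ × ℝ} (he : e ≠ 0) (hx : x ∈ S) (hy : y ∈ S) (hz : z ∈ S)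
    (hxyz : Wbtw ℝ x y z) (hxy : x ≠ y) (hyz : y ≠ z) (hperp : dotR e (z - x) = 0) :
    (∀ q ∈ S, dotR e y ≤ dotR e q) ∨ (∀ q ∈ S, dotR e q ≤ dotR e y) := by
  obtain ⟨θ, ⟨hθ₀, hθ₁⟩, hθy⟩ := hxyz
  rw [AffineMap.lineMap_apply_module'] at hθy
  have hv : z - x ≠ 0 := fun h => hxy (by rw [← hθy, h, smul_zero, zero_add])
  have hθ₀' : 0 < θ := hθ₀.lt_of_ne <| by
    rintro rfl; exact hxy (by rw [← hθy, zero_smul, zero_add])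
  have hθ₁' : θ < 1 := hθ₁.lt_of_ne <| by
    rintro rfl; exact hyz (by rw [← hθy, one_smul, sub_add_cancel])
  obtain ⟨w, hw₀, hw⟩ := hS _ hy
  have hwv : dotR w (z - x) = 0 := by
    have h₁ := hw x hx
    have h₂ := hw z hz
    rw [← hθy, show x - (θ • (z - x) + x) = (-θ) • (z - x) by module, dotR_smul_right] at h₁
    rw [← hθy, show z - (θ • (z - x) + x) = (1 - θ) • (z - x) by module, dotR_smul_right] at h₂
    nlinarith
  have hwe := dotR_self_smul_eq_of_dotR_eq_zero hv hperp hwv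
  have hside : ∀ q, dotR e e * dotR w (q - y) = dotR w e * (dotR e q - dotR e y) := by
    intro q
    rw [← dotR_smul_left, hwe, dotR_smul_left, dotR_sub_right]
  have hee := dotR_self_pos he
  rcases lt_trichotomy (dotR w e) 0 with hneg | hzero | hpos
  · exact Or.inr fun q hq => by nlinarith [hside q, hw q hq]
  · rw [hzero, zero_smul, smul_eq_zero] at hwe
    exact absurd (hwe.resolve_left hee.ne') hw₀
  · exact Or.inl fun q hq => by nlinarith [hside q, hw q hq]

lemma forall_le_or_forall_ge_of_three_mem_line {S : Set (ℝ × ℝ)}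
    (hS : ∀ p ∈ S, ∃ w : ℝ × ℝ, w ≠ 0 ∧ ∀ q ∈ S, 0 ≤ dotR w (q - p))
    {e : ℝ × ℝ} (he : e ≠ 0) {c : ℝ} {x y z : ℝ × ℝ} (hx : x ∈ S) (hy : y ∈ S) (hz : z ∈ S)
    (hxy : x ≠ y) (hyz : y ≠ z) (hxz : x ≠ z)
    (hex : dotR e x = c) (hey : dotR e y = c) (hez : dotR e z = c) :
    (∀ q ∈ S, c ≤ dotR e q) ∨ (∀ q ∈ S, dotR e q ≤ c) := by
  have hcol : Collinear ℝ {x, y, z} := (collinear_setOf_dotR_eq he c).subset <| by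
    simp only [insert_subset_iff, singleton_subset_iff]
    exact ⟨hex, hey, hez⟩
  have hline : ∀ p q, dotR e p = c → dotR e q = c → dotR e (q - p) = 0 := fun p q hp hq => by
    rw [dotR_sub_right, hp, hq, sub_self]
  rcases hcol.wbtw_or_wbtw_or_wbtw with h | h | h
  · simpa only [hey] using forall_le_or_forall_ge_of_wbtw hS he hx hy hz h hxy hyz
      (hline _ _ hex hez)
  · simpa only [hez] using forall_le_or_forall_ge_of_wbtw hS he hy hz hx h hyz hxz.symm
      (hline _ _ hey hex)
  · simpa only [hex] using forall_le_or_forall_ge_of_wbtw hS he hz hx hy h hxz.symm hxy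
      (hline _ _ hez hey)

def HasUpDownUp (f : ℝ → ℝ) (s : Set ℝ) : Prop :=
  ∃ t₁ ∈ s, ∃ t₂ ∈ s, ∃ t₃ ∈ s, ∃ t₄ ∈ s, ∃ c, t₁ ≤ t₂ ∧ t₂ ≤ t₃ ∧ t₃ ≤ t₄ ∧
    f t₁ < c ∧ c < f t₂ ∧ f t₃ < c ∧ c < f t₄

lemma not_hasUpDownUp_dotR {γ : ℝ → ℝ × ℝ} {a b : ℝ} (hc : ContinuousOn γ (Icc a b))
    (hinj : InjOn γ (Icc a b))
    (hsupp : ∀ t ∈ Icc a b, ∃ w : ℝ × ℝ, w ≠ 0 ∧ ∀ s ∈ Icc a b, 0 ≤ dotR w (γ s - γ t))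
    {e : ℝ × ℝ} (he : e ≠ 0) : ¬ HasUpDownUp (fun t => dotR e (γ t)) (Icc a b) := by
  rintro ⟨t₁, h₁, t₂, h₂, t₃, h₃, t₄, h₄, c, h₁₂, h₂₃, h₃₄, f₁, f₂, f₃, f₄⟩
  have hcont : ContinuousOn (fun t => dotR e (γ t)) (Icc a b) :=
    (continuousOn_const.mul hc.fst).add (continuousOn_const.mul hc.snd)
  have hsub : ∀ {x y}, x ∈ Icc a b → y ∈ Icc a b → Icc x y ⊆ Icc a b :=
    fun hx hy => Icc_subset_Icc hx.1 hy.2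
  obtain ⟨r₁, hr₁, e₁⟩ := intermediate_value_Ioo h₁₂ (hcont.mono (hsub h₁ h₂)) ⟨f₁, f₂⟩
  obtain ⟨r₂, hr₂, e₂⟩ := intermediate_value_Ioo' h₂₃ (hcont.mono (hsub h₂ h₃)) ⟨f₃, f₂⟩
  obtain ⟨r₃, hr₃, e₃⟩ := intermediate_value_Ioo h₃₄ (hcont.mono (hsub h₃ h₄)) ⟨f₃, f₄⟩
  have m₁ := hsub h₁ h₂ (Ioo_subset_Icc_self hr₁)
  have m₂ := hsub h₂ h₃ (Ioo_subset_Icc_self hr₂)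
  have m₃ := hsub h₃ h₄ (Ioo_subset_Icc_self hr₃)
  have hne : ∀ {r r'}, r ∈ Icc a b → r' ∈ Icc a b → r < r' → γ r ≠ γ r' :=
    fun hr hr' hlt heq => hlt.ne (hinj hr hr' heq)
  have hS : ∀ p ∈ γ '' Icc a b, ∃ w : ℝ × ℝ, w ≠ 0 ∧ ∀ q ∈ γ '' Icc a b, 0 ≤ dotR w (q - p) := by
    rintro _ ⟨t, ht, rfl⟩
    obtain ⟨w, hw₀, hw⟩ := hsupp t ht
    exact ⟨w, hw₀, forall_mem_image.2 hw⟩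
  rcases forall_le_or_forall_ge_of_three_mem_line hS he (mem_image_of_mem γ m₁)
      (mem_image_of_mem γ m₂) (mem_image_of_mem γ m₃) (hne m₁ m₂ (hr₁.2.trans hr₂.1))
      (hne m₂ m₃ (hr₂.2.trans hr₃.1)) (hne m₁ m₃ ((hr₁.2.trans hr₂.1).trans (hr₂.2.trans hr₃.1)))
      e₁ e₂ e₃ with hup | hdown
  · exact (hup _ (mem_image_of_mem γ h₃)).not_gt f₃
  · exact (hdown _ (mem_image_of_mem γ h₂)).not_gt f₂

lemma antitoneOn_monotoneOn_antitoneOn_of_not_hasUpDownUp {f : ℝ → ℝ} {a b tm tM : ℝ}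
    (hf : ¬ HasUpDownUp f (Icc a b)) (htm : tm ∈ Icc a b) (htM : tM ∈ Icc a b)
    (hmin : IsMinOn f (Icc a b) tm) (hmax : IsMaxOn f (Icc a b) tM) (hle : tm ≤ tM) :
    AntitoneOn f (Icc a tm) ∧ MonotoneOn f (Icc tm tM) ∧ AntitoneOn f (Icc tM b) := by
  refine ⟨fun x hx y hy hxy => ?_, fun x hx y hy hxy => ?_, fun x hx y hy hxy => ?_⟩ <;>
    by_contra! hlt <;> obtain ⟨c, hc₁, hc₂⟩ := exists_between hlt
  · have hx' : x ∈ Icc a b := ⟨hx.1, hx.2.trans (hle.trans htM.2)⟩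
    have hy' : y ∈ Icc a b := ⟨hy.1, hy.2.trans (hle.trans htM.2)⟩
    exact hf ⟨x, hx', y, hy', tm, htm, tM, htM, c, hxy, hy.2, hle, hc₁, hc₂,
      (hmin hx').trans_lt hc₁, hc₂.trans_le (hmax hy')⟩
  · have hx' : x ∈ Icc a b := ⟨htm.1.trans hx.1, hx.2.trans htM.2⟩
    have hy' : y ∈ Icc a b := ⟨htm.1.trans hy.1, hy.2.trans htM.2⟩
    exact hf ⟨tm, htm, x, hx', y, hy', tM, htM, c, hx.1, hxy, hy.2,
      (hmin hy').trans_lt hc₁, hc₂, hc₁, hc₂.trans_le (hmax hx')⟩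
  · have hx' : x ∈ Icc a b := ⟨htM.1.trans hx.1, hx.2⟩
    have hy' : y ∈ Icc a b := ⟨htM.1.trans hy.1, hy.2⟩
    exact hf ⟨tm, htm, tM, htM, x, hx', y, hy', c, hle, hx.1, hxy,
      (hmin hx').trans_lt hc₁, hc₂.trans_le (hmax hy'), hc₁, hc₂⟩

lemma exists_finset_monotoneOn_or_antitoneOn {f : ℝ → ℝ} {a b : ℝ} (hab : a ≤ b)
    (hf : ContinuousOn f (Icc a b)) (hup : ¬ HasUpDownUp f (Icc a b))
    (hdown : ¬ HasUpDownUp (fun t => -f t) (Icc a b)) :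
    ∃ F : Finset ℝ, ↑F ⊆ Icc a b ∧ ∀ x y, a ≤ x → y ≤ b → (∀ p ∈ F, p ≤ x ∨ y ≤ p) →
      MonotoneOn f (Icc x y) ∨ AntitoneOn f (Icc x y) := by
  obtain ⟨tm, htm, hmin⟩ := isCompact_Icc.exists_isMinOn (nonempty_Icc.2 hab) hf
  obtain ⟨tM, htM, hmax⟩ := isCompact_Icc.exists_isMaxOn (nonempty_Icc.2 hab) hf
  obtain ⟨p, hp, q, hq, hpq, h₁, h₂, h₃⟩ : ∃ p ∈ Icc a b, ∃ q ∈ Icc a b, p ≤ q ∧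
      (MonotoneOn f (Icc a p) ∨ AntitoneOn f (Icc a p)) ∧
      (MonotoneOn f (Icc p q) ∨ AntitoneOn f (Icc p q)) ∧
      (MonotoneOn f (Icc q b) ∨ AntitoneOn f (Icc q b)) := by
    rcases le_total tm tM with hle | hle
    · obtain ⟨h₁, h₂, h₃⟩ :=
        antitoneOn_monotoneOn_antitoneOn_of_not_hasUpDownUp hup htm htM hmin hmax hle
      exact ⟨tm, htm, tM, htM, hle, .inr h₁, .inl h₂, .inr h₃⟩
    · obtain ⟨h₁, h₂, h₃⟩ := antitoneOn_monotoneOn_antitoneOn_of_not_hasUpDownUp hdown htM htm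
        hmax.neg hmin.neg hle
      exact ⟨tM, htM, tm, htm, hle, .inl (by simpa using h₁.neg), .inr (by simpa using h₂.neg),
        .inl (by simpa using h₃.neg)⟩
  refine ⟨{p, q}, by simp [insert_subset_iff, hp, hq], fun x y hx hy hF => ?_⟩
  have mono {I : Set ℝ} (hI : Icc x y ⊆ I) :
      MonotoneOn f I ∨ AntitoneOn f I → MonotoneOn f (Icc x y) ∨ AntitoneOn f (Icc x y) :=
    Or.imp (·.mono hI) (·.mono hI)
  rcases hF p (by simp) with hpx | hyp
  · rcases hF q (by simp) with hqx | hyq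
    · exact mono (Icc_subset_Icc hqx hy) h₃
    · exact mono (Icc_subset_Icc hpx hyq) h₂
  · exact mono (Icc_subset_Icc hx hyp) h₁

lemma exists_partition_avoiding {a b : ℝ} (hab : a ≤ b) (F : Finset ℝ) (hF : ↑F ⊆ Icc a b) :
    ∃ (m : ℕ) (s : Fin (m + 1) → ℝ), StrictMono s ∧ s 0 = a ∧ s (Fin.last m) = b ∧
      ∀ j : Fin m, ∀ p ∈ F, p ≤ s j.castSucc ∨ s j.succ ≤ p := by
  set G := insert a (insert b F)
  have hG : ∀ p ∈ G, p ∈ Icc a b := by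
    intro p hp
    rcases Finset.mem_insert.1 hp with rfl | hp
    · exact ⟨le_rfl, hab⟩
    rcases Finset.mem_insert.1 hp with rfl | hp
    · exact ⟨hab, le_rfl⟩
    · exact hF hp
  have hcard : G.card = G.card - 1 + 1 :=
    (Nat.sub_add_cancel (Finset.card_pos.2 ⟨a, Finset.mem_insert_self _ _⟩)).symm
  set s := G.orderEmbOfFin hcard
  have hrange : ∀ p ∈ G, ∃ k, s k = p := fun p hp => by
    rwa [← Finset.mem_coe, ← Finset.range_orderEmbOfFin G hcard] at hp
  obtain ⟨ka, hka⟩ := hrange a (by simp [G])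
  obtain ⟨kb, hkb⟩ := hrange b (by simp [G])
  refine ⟨G.card - 1, s, s.strictMono, ?_, ?_, fun j p hp => ?_⟩
  · exact le_antisymm (hka ▸ s.monotone (Fin.zero_le ka))
      (hG _ (G.orderEmbOfFin_mem hcard 0)).1
  · exact le_antisymm (hG _ (G.orderEmbOfFin_mem hcard _)).2
      (hkb ▸ s.monotone (Fin.le_last kb))
  obtain ⟨k, rfl⟩ := hrange p (by simp [G, hp])
  rcases le_or_gt k j.castSucc with hk | hk
  · exact .inl (s.monotone hk)
  · exact .inr (s.monotone (Fin.castSucc_lt_iff_succ_le.1 hk))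

def IsProjectableArc (γ : ℝ → ℝ × ℝ) (a b : ℝ) : Prop :=
  γ a ≠ γ b ∧ projLine (γ a) (γ b) '' (γ '' Icc a b) = segment ℝ (γ a) (γ b)

lemma projLine_image_eq_segment {γ : ℝ → ℝ × ℝ} {a b : ℝ} (hab : a ≤ b) (hne : γ a ≠ γ b)
    (hc : ContinuousOn γ (Icc a b))
    (hstrip : ∀ t ∈ Icc a b, dotR (γ t - γ a) (γ b - γ a) ∈ Icc 0 (dotR (γ b - γ a) (γ b - γ a))) :
    projLine (γ a) (γ b) '' (γ '' Icc a b) = segment ℝ (γ a) (γ b) := by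
  set u := γ b - γ a
  set D := dotR u u
  have hD : 0 < D := dotR_self_pos (sub_ne_zero.2 hne.symm)
  set h : ℝ → ℝ := fun t => dotR (γ t - γ a) u
  have hcont : ContinuousOn h (Icc a b) :=
    (((hc.fst.sub continuousOn_const).mul continuousOn_const).add
      ((hc.snd.sub continuousOn_const).mul continuousOn_const))
  have himage : h '' Icc a b = Icc 0 D := by
    refine Subset.antisymm (MapsTo.image_subset hstrip) ?_
    have h0 : h a = 0 := by simp [h, dotR]
    simpa [h0] using intermediate_value_Icc hab hcont
  calc projLine (γ a) (γ b) '' (γ '' Icc a b)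
      = (fun θ => γ a + θ • u) '' ((· * D⁻¹) '' (h '' Icc a b)) := by
        simp only [image_image, projLine, h, u, D, div_eq_mul_inv]
    _ = segment ℝ (γ a) (γ b) := by
        rw [himage, image_mul_right_Icc' _ _ (inv_pos.2 hD), zero_mul, mul_inv_cancel₀ hD.ne',
          segment_eq_image']

lemma sub_mul_sub_mem_Icc_of_monotoneOn_or_antitoneOn {f : ℝ → ℝ} {a b t : ℝ}
    (hf : MonotoneOn f (Icc a b) ∨ AntitoneOn f (Icc a b)) (ht : t ∈ Icc a b) :
    (f t - f a) * (f b - f a) ∈ Icc 0 ((f b - f a) * (f b - f a)) := by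
  have ha : a ∈ Icc a b := ⟨le_rfl, ht.1.trans ht.2⟩
  have hb : b ∈ Icc a b := ⟨ht.1.trans ht.2, le_rfl⟩
  rcases hf with hf | hf
  · have h₁ := hf ha ht ht.1
    have h₂ := hf ht hb ht.2
    constructor <;> nlinarith
  · have h₁ := hf ha ht ht.1
    have h₂ := hf ht hb ht.2
    constructor <;> nlinarith

lemma isProjectableArc_of_monotoneOn_or_antitoneOn {γ : ℝ → ℝ × ℝ} {a b : ℝ} (hab : a < b)
    (hc : ContinuousOn γ (Icc a b)) (hinj : InjOn γ (Icc a b))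
    (h₁ : MonotoneOn (fun t => (γ t).1) (Icc a b) ∨ AntitoneOn (fun t => (γ t).1) (Icc a b))
    (h₂ : MonotoneOn (fun t => (γ t).2) (Icc a b) ∨ AntitoneOn (fun t => (γ t).2) (Icc a b)) :
    IsProjectableArc γ a b := by
  have hne : γ a ≠ γ b := fun h => hab.ne (hinj (left_mem_Icc.2 hab.le) (right_mem_Icc.2 hab.le) h)
  refine ⟨hne, projLine_image_eq_segment hab.le hne hc fun t ht => ?_⟩
  have hx := sub_mul_sub_mem_Icc_of_monotoneOn_or_antitoneOn h₁ ht
  have hy := sub_mul_sub_mem_Icc_of_monotoneOn_or_antitoneOn h₂ ht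
  simp only [dotR, Prod.fst_sub, Prod.snd_sub, mem_Icc] at hx hy ⊢
  constructor <;> linarith

theorem stmt16_general (L : ℝ) (hL : 0 < L) (γ : ℝ → ℝ × ℝ)
    (hc : ContinuousOn γ (Set.Icc 0 L)) (hinj : Set.InjOn γ (Set.Icc 0 L))
    (hsupp : ∀ t ∈ Set.Icc 0 L, ∃ w : ℝ × ℝ, w ≠ 0 ∧
      ∀ s ∈ Set.Icc 0 L, 0 ≤ dotR w (γ s - γ t)) :
    ∃ (m : ℕ) (s : Fin (m+1) → ℝ), StrictMono s ∧ s 0 = 0 ∧ s (Fin.last m) = L ∧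
      ∀ j : Fin m,
        γ (s j.castSucc) ≠ γ (s j.succ) ∧
        projLine (γ (s j.castSucc)) (γ (s j.succ)) ''
            (γ '' Set.Icc (s j.castSucc) (s j.succ))
          = segment ℝ (γ (s j.castSucc)) (γ (s j.succ)) := by
  have hlin : ∀ e : ℝ × ℝ, e ≠ 0 → ¬ HasUpDownUp (fun t => dotR e (γ t)) (Icc 0 L) :=
    fun e he => not_hasUpDownUp_dotR hc hinj hsupp he
  obtain ⟨F₁, hF₁, h₁⟩ := exists_finset_monotoneOn_or_antitoneOn hL.le hc.fst
    (by simpa [dotR] using hlin (1, 0) (by simp)) (by simpa [dotR] using hlin (-1, 0) (by simp))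
  obtain ⟨F₂, hF₂, h₂⟩ := exists_finset_monotoneOn_or_antitoneOn hL.le hc.snd
    (by simpa [dotR] using hlin (0, 1) (by simp)) (by simpa [dotR] using hlin (0, -1) (by simp))
  obtain ⟨m, s, hs, hs0, hsL, hgap⟩ :=
    exists_partition_avoiding hL.le (F₁ ∪ F₂) (by simpa using ⟨hF₁, hF₂⟩)
  refine ⟨m, s, hs, hs0, hsL, fun j => ?_⟩
  have hmem : ∀ k, s k ∈ Icc 0 L := fun k =>
    ⟨hs0 ▸ hs.monotone (Fin.zero_le k), hsL ▸ hs.monotone (Fin.le_last k)⟩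
  have hsub := Icc_subset_Icc (hmem j.castSucc).1 (hmem j.succ).2
  exact isProjectableArc_of_monotoneOn_or_antitoneOn (hs j.castSucc_lt_succ) (hc.mono hsub)
    (hinj.mono hsub)
    (h₁ _ _ (hmem _).1 (hmem _).2 fun p hp => hgap j p (Finset.mem_union_left _ hp))
    (h₂ _ _ (hmem _).1 (hmem _).2 fun p hp => hgap j p (Finset.mem_union_right _ hp))

theorem stmt16 (L : ℝ) (hL : 0 < L) (γ γ' : ℝ → ℝ × ℝ)
    (hc : ContinuousOn γ (Set.Icc 0 L)) (hinj : Set.InjOn γ (Set.Icc 0 L))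
    (hend : γ 0 ≠ γ L)
    (hderiv : ∀ t ∈ Set.Ioo 0 L, HasDerivAt γ (γ' t) t)
    (harc : ∀ t ∈ Set.Ioo 0 L, ‖γ' t‖ = 1)
    (hsupp : ∀ t ∈ Set.Icc 0 L, ∃ w : ℝ × ℝ, w ≠ 0 ∧
      ∀ s ∈ Set.Icc 0 L, 0 ≤ dotR w (γ s - γ t)) :
    ∃ (m : ℕ) (s : Fin (m+1) → ℝ), StrictMono s ∧ s 0 = 0 ∧ s (Fin.last m) = L ∧
      ∀ j : Fin m,
        γ (s j.castSucc) ≠ γ (s j.succ) ∧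
        projLine (γ (s j.castSucc)) (γ (s j.succ)) ''
            (γ '' Set.Icc (s j.castSucc) (s j.succ))
          = segment ℝ (γ (s j.castSucc)) (γ (s j.succ)) :=
  stmt16_general L hL γ hc hinj hsupp
end
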